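/- arXiv:2104.14775 — 4 statements merged into one kernel-verified Lean document; each statement's English description precedes it below -/
import Mathlib

section
/- Let H = (V, 𝓗) be a connected hypergraph and μ a probability measure with full support on V such that for every independent set I of H, μ(I) ≤ Σ_{H ∈ 𝓗} |H ∩ I| · min_{k ∈ H} μ(k). Then for every subset B ⊆ V (not necessarily independent), μ(B) ≤ Σ_{H ∈ 𝓗} |H ∩ B| · min_{k ∈ H} μ(k). -/
/-!
Removing from a non-independent set `B` a `μ`-minimal vertex `k` of an edge `H₀ ⊆ B` decreases the
left side by `μ k` and the right side by the sum of the edge minima over all edges through `k`, which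
is at least `min_{H₀} μ = μ k`. Iterating until `B` becomes independent reduces the claim to the
hypothesis.
-/

open Finset

section

variable {V : Type*} [DecidableEq V]

lemma sum_card_inter_mul_eq_erase_add (𝓗 : Finset (Finset V)) (c : Finset V → ℝ) {B : Finset V}
    {k : V} (hk : k ∈ B) :
    ∑ H ∈ 𝓗, ((H ∩ B).card : ℝ) * c H =
      ∑ H ∈ 𝓗, ((H ∩ B.erase k).card : ℝ) * c H + ∑ H ∈ 𝓗 with k ∈ H, c H := by
  rw [sum_filter, ← sum_add_distrib]
  refine sum_congr rfl fun H _ => ?_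
  rw [inter_erase]
  split_ifs with hkH
  · rw [← card_erase_add_one (mem_inter.2 ⟨hkH, hk⟩)]
    push_cast
    ring
  · rw [erase_eq_of_notMem fun h => hkH (mem_inter.1 h).1, add_zero]

theorem sum_le_sum_card_inter_mul_of_forall_independent (𝓗 : Finset (Finset V)) (μ : V → ℝ)
    (c : Finset V → ℝ) (hc : ∀ H ∈ 𝓗, 0 ≤ c H) (hmin : ∀ H ∈ 𝓗, ∃ k ∈ H, μ k ≤ c H)
    (hI : ∀ I : Finset V, (∀ H ∈ 𝓗, ¬ H ⊆ I) →
      ∑ v ∈ I, μ v ≤ ∑ H ∈ 𝓗, ((H ∩ I).card : ℝ) * c H)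
    (B : Finset V) : ∑ v ∈ B, μ v ≤ ∑ H ∈ 𝓗, ((H ∩ B).card : ℝ) * c H := by
  induction B using Finset.strongInduction with
  | H B ih =>
  by_cases hB : ∀ H ∈ 𝓗, ¬ H ⊆ B
  · exact hI B hB
  push Not at hB
  obtain ⟨H₀, hH₀, hH₀B⟩ := hB
  obtain ⟨k, hkH₀, hk⟩ := hmin H₀ hH₀
  have hkB : k ∈ B := hH₀B hkH₀
  have h_edges : μ k ≤ ∑ H ∈ 𝓗 with k ∈ H, c H :=
    hk.trans <| single_le_sum (fun H hH => hc H (mem_filter.1 hH).1) (mem_filter.2 ⟨hH₀, hkH₀⟩)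
  calc ∑ v ∈ B, μ v = μ k + ∑ v ∈ B.erase k, μ v := (add_sum_erase B μ hkB).symm
    _ ≤ ∑ H ∈ 𝓗 with k ∈ H, c H + ∑ H ∈ 𝓗, ((H ∩ B.erase k).card : ℝ) * c H :=
      add_le_add h_edges (ih _ (erase_ssubset hkB))
    _ = ∑ H ∈ 𝓗, ((H ∩ B).card : ℝ) * c H := by
      rw [sum_card_inter_mul_eq_erase_add 𝓗 c hkB, add_comm]

end

theorem stmt_1_general {V : Type*} [DecidableEq V]
    (𝓗 : Finset (Finset V))
    (hne : ∀ H ∈ 𝓗, H.Nonempty)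
    (μ : V → ℝ) (hpos : ∀ v, 0 < μ v)
    (hI : ∀ I : Finset V, (∀ H ∈ 𝓗, ¬ H ⊆ I) →
      ∑ v ∈ I, μ v ≤ ∑ H ∈ 𝓗, ((H ∩ I).card : ℝ) * sInf (μ '' ↑H)) :
    ∀ B : Finset V,
      ∑ v ∈ B, μ v ≤ ∑ H ∈ 𝓗, ((H ∩ B).card : ℝ) * sInf (μ '' ↑H) := by
  have hmin : ∀ H ∈ 𝓗, sInf (μ '' ↑H) ∈ μ '' ↑H := fun H hH =>
    ((coe_nonempty.2 (hne H hH)).image μ).csInf_mem (H.finite_toSet.image μ)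
  refine sum_le_sum_card_inter_mul_of_forall_independent 𝓗 μ _ (fun H hH => ?_)
    (fun H hH => ?_) hI
  · obtain ⟨k, -, hk⟩ := hmin H hH
    exact hk ▸ (hpos k).le
  · obtain ⟨k, hkH, hk⟩ := hmin H hH
    exact ⟨k, hkH, hk.le⟩

/-- For a connected hypergraph and a full-support probability measure `μ`,
if `μ(I) ≤ Σ_H |H ∩ I| · min_H μ` for every independent set `I`, then the same
inequality holds for every subset `B ⊆ V`. -/
theorem stmt_1 {V : Type*} [Fintype V] [DecidableEq V]
    (𝓗 : Finset (Finset V))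
    (hne : ∀ H ∈ 𝓗, H.Nonempty)
    (hcover : ∀ v : V, ∃ H ∈ 𝓗, v ∈ H)
    (hconn : ∀ H ∈ 𝓗, ∀ H' ∈ 𝓗,
      Relation.ReflTransGen (fun A B => A ∈ 𝓗 ∧ B ∈ 𝓗 ∧ (A ∩ B).Nonempty) H H')
    (μ : V → ℝ) (hpos : ∀ v, 0 < μ v) (hsum : ∑ v, μ v = 1)
    (hI : ∀ I : Finset V, (∀ H ∈ 𝓗, ¬ H ⊆ I) →
      ∑ v ∈ I, μ v ≤ ∑ H ∈ 𝓗, ((H ∩ I).card : ℝ) * sInf (μ '' ↑H)) :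
    ∀ B : Finset V,
      ∑ v ∈ B, μ v ≤ ∑ H ∈ 𝓗, ((H ∩ B).card : ℝ) * sInf (μ '' ↑H) :=
  stmt_1_general 𝓗 hne μ hpos hI
end

section
/- Let V be a finite set of cardinality q and μ a probability measure with full support on V satisfying μ_min / μ_max > (⌊(q+1)/2⌋ − 1) / ⌊(q+1)/2⌋, where μ_min = min_{i∈V} μ(i) and μ_max = max_{i∈V} μ(i). Then μ is strictly monotone with respect to cardinality: for all E, F ⊆ V, |E| < |F| implies μ(E) < μ(F). -/
/-!
Write `m`, `M` for the least and largest weight and `t = ⌊(q+1)/2⌋`; the hypothesis says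
`(t - 1) M < t m`, hence `(j - 1) M < j m` for every `1 ≤ j ≤ t`. If `|E| < j ≤ |F|` for such a
`j`, then `μ(E) ≤ (j - 1) M < j m ≤ μ(F)`. When `|F| ≤ t` take `j = |F|`; otherwise pass to
complements, which reverses the inequality to be shown, and take `j = q - |F| + 1 ≤ t`.
-/

open Finset

theorem pred_mul_lt_mul_of_le {m M : ℝ} {j t : ℕ} (hmM : m ≤ M) (hj : 1 ≤ j) (hjt : j ≤ t)
    (ht : ((t : ℝ) - 1) * M < t * m) : ((j : ℝ) - 1) * M < j * m := by
  have hjt' : ((j : ℝ) - 1) * (M - m) ≤ ((t : ℝ) - 1) * (M - m) :=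
    mul_le_mul_of_nonneg_right (by gcongr) (sub_nonneg.2 hmM)
  have hj' : (1 : ℝ) ≤ j := by exact_mod_cast hj
  nlinarith

section

variable {ι : Type*} {w : ι → ℝ} {m M : ℝ}

theorem sum_lt_sum_of_card_lt_of_bounds {E F : Finset ι} (hm : 0 ≤ m) (hM : 0 ≤ M)
    (hwM : ∀ v ∈ E, w v ≤ M) (hwm : ∀ v ∈ F, m ≤ w v) {j : ℕ} (hEj : #E < j) (hjF : j ≤ #F)
    (hj : ((j : ℝ) - 1) * M < j * m) : ∑ v ∈ E, w v < ∑ v ∈ F, w v := by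
  have hEj' : (#E : ℝ) ≤ j - 1 := by
    have : (#E : ℝ) + 1 ≤ j := by exact_mod_cast hEj
    linarith
  have hjF' : (j : ℝ) ≤ #F := by exact_mod_cast hjF
  calc ∑ v ∈ E, w v ≤ #E * M := by simpa using sum_le_card_nsmul E w M hwM
    _ ≤ (j - 1) * M := by gcongr
    _ < j * m := hj
    _ ≤ #F * m := by gcongr
    _ ≤ ∑ v ∈ F, w v := by simpa using card_nsmul_le_sum F w m hwm

theorem sum_lt_sum_of_sum_compl_lt [Fintype ι] [DecidableEq ι] {E F : Finset ι}
    (h : ∑ v ∈ Fᶜ, w v < ∑ v ∈ Eᶜ, w v) : ∑ v ∈ E, w v < ∑ v ∈ F, w v := by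
  have hE := sum_add_sum_compl E w
  have hF := sum_add_sum_compl F w
  linarith

end

theorem stmt_6_general {V : Type*} [Fintype V] [Nonempty V]
    (μ : V → ℝ) (hpos : ∀ v, 0 < μ v)
    (h : (Finset.univ.inf' Finset.univ_nonempty μ) /
          (Finset.univ.sup' Finset.univ_nonempty μ) >
        ((((Fintype.card V + 1)/2 : ℕ) : ℝ) - 1) / (((Fintype.card V + 1)/2 : ℕ) : ℝ)) :
    ∀ E F : Finset V, E.card < F.card → ∑ v ∈ E, μ v < ∑ v ∈ F, μ v := by
  classical
  intro E F hEF
  set m := univ.inf' univ_nonempty μ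
  set M := univ.sup' univ_nonempty μ
  set q := Fintype.card V
  set t := (q + 1) / 2
  have hm_le (v) : m ≤ μ v := inf'_le μ (mem_univ v)
  have hle_M (v) : μ v ≤ M := le_sup' μ (mem_univ v)
  have hm : 0 < m := lt_inf'_iff _ |>.2 fun v _ => hpos v
  have hmM : m ≤ M := (hm_le (Classical.arbitrary V)).trans (hle_M _)
  have hM : 0 < M := hm.trans_le hmM
  have ht0 : 0 < t := by have : 0 < q := Fintype.card_pos; omega
  have ht : ((t : ℝ) - 1) * M < t * m := by
    rw [gt_iff_lt, div_lt_div_iff₀ (by positivity) hM] at h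
    linarith
  have hF : #F ≤ q := card_le_univ F
  rcases le_or_gt #F t with hFt | htF
  · exact sum_lt_sum_of_card_lt_of_bounds hm.le hM.le (fun v _ => hle_M v) (fun v _ => hm_le v)
      hEF le_rfl (pred_mul_lt_mul_of_le hmM (by omega) hFt ht)
  · refine sum_lt_sum_of_sum_compl_lt (sum_lt_sum_of_card_lt_of_bounds hm.le hM.le
      (fun v _ => hle_M v) (fun v _ => hm_le v) (j := q - #F + 1) ?_ ?_
      (pred_mul_lt_mul_of_le hmM (by omega) (by omega) ht)) <;> rw [card_compl] <;> omega

/-- If a full-support probability measure on a finite set of cardinality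
`q` satisfies `μ_min/μ_max > (⌊(q+1)/2⌋ − 1)/⌊(q+1)/2⌋`, then `μ` is strictly monotone
with respect to cardinality: `|E| < |F| → μ(E) < μ(F)`. -/
theorem stmt_6 {V : Type*} [Fintype V] [Nonempty V]
    (μ : V → ℝ) (hpos : ∀ v, 0 < μ v) (hsum : ∑ v, μ v = 1)
    (h : (Finset.univ.inf' Finset.univ_nonempty μ) /
          (Finset.univ.sup' Finset.univ_nonempty μ) >
        ((((Fintype.card V + 1)/2 : ℕ) : ℝ) - 1) / (((Fintype.card V + 1)/2 : ℕ) : ℝ)) :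
    ∀ E F : Finset V, E.card < F.card → ∑ v ∈ E, μ v < ∑ v ∈ F, μ v :=
  stmt_6_general μ hpos h
end

section
/- Let 0 < α < 1/3 and consider the drift vectors Δ = (3α−1, 3α−1) (interior), Δ' = (α, 1−α) (first axis), Δ'' = (1−α, α) (second axis). Set u = (1−3α)/2 > 0. Then for any w with 3α−1 < w < (3α−1)α/(1−α), the quadratic form Q(x,y) = u x² + u y² + w x y is positive definite (i.e., 4u² > w²) and the four inequalities 2uΔ_x + wΔ_y < 0, 2uΔ_y + wΔ_x < 0, 2uΔ'_x + wΔ'_y < 0, 2uΔ''_y + wΔ''_x < 0 all hold. -/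
lemma neg_mul_div_one_sub_lt {c t : ℝ} (hc : 0 < c) (ht : t < 1) : -c * t / (1 - t) < c := by
  rw [div_lt_iff₀ (sub_pos.2 ht)]
  linarith

theorem stmt_15_general (α w u : ℝ) (hα : α < 1/3)
    (hu : u = (1 - 3*α)/2)
    (hw1 : 3*α - 1 < w) (hw2 : w < (3*α - 1)*α/(1 - α)) :
    0 < u ∧
    4*u^2 > w^2 ∧
    2*u*(3*α - 1) + w*(3*α - 1) < 0 ∧
    2*u*(3*α - 1) + w*(3*α - 1) < 0 ∧
    2*u*α + w*(1 - α) < 0 ∧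
    2*u*α + w*(1 - α) < 0 := by
  have h2u : 2*u = 1 - 3*α := by rw [hu]; ring
  have hu0 : 0 < u := by linarith
  have hw_lt : w < 2*u := by
    refine hw2.trans ?_
    rw [h2u, show (3*α - 1)*α = -(1 - 3*α)*α by ring]
    exact neg_mul_div_one_sub_lt (by linarith) (by linarith)
  have hinterior : 2*u*(3*α - 1) + w*(3*α - 1) < 0 := by
    rw [← add_mul]
    exact mul_neg_of_pos_of_neg (by linarith) (by linarith)
  have hboundary : 2*u*α + w*(1 - α) < 0 := by
    have hw2' : w*(1 - α) < (3*α - 1)*α := (lt_div_iff₀ (by linarith)).mp hw2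
    rw [h2u]
    linarith
  have hdefinite : w^2 < (2*u)^2 := sq_lt_sq' (by linarith) hw_lt
  exact ⟨hu0, by linarith, hinterior, hinterior, hboundary, hboundary⟩

/-- Lyapunov quadratic form for the complete 3-uniform hypergraph. For
`0 < α < 1/3`, `u = (1−3α)/2` and `3α−1 < w < (3α−1)α/(1−α)`, the form
`Q(x,y) = ux² + uy² + wxy` is positive definite (`4u² > w²`) and the four drift
inequalities hold. -/
theorem stmt_15 (α w u : ℝ) (hα0 : 0 < α) (hα : α < 1/3)
    (hu : u = (1 - 3*α)/2)
    (hw1 : 3*α - 1 < w) (hw2 : w < (3*α - 1)*α/(1 - α)) :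
    0 < u ∧
    4*u^2 > w^2 ∧
    2*u*(3*α - 1) + w*(3*α - 1) < 0 ∧
    2*u*(3*α - 1) + w*(3*α - 1) < 0 ∧
    2*u*α + w*(1 - α) < 0 ∧
    2*u*α + w*(1 - α) < 0 :=
  stmt_15_general α w u hα hu hw1 hw2
end

section
/- Let λ₁, λ₂, λ₃, λ₄ > 0 and define α = [(λ₂)² − (λ₃−λ₄)²] / [λ₂(λ₂+λ₃+λ₄)]. There exist arrival rates λ satisfying the conditions λ₁ < λ₂, λ₁ + λ₃ < λ₂ + λ₄, λ₁ + λ₄ < λ₂ + λ₃ but with λ₁ ≥ α·λ₂. Concretely, for any 0 < ε ≤ 2/5, the choice λ₁ = ε/2, λ₂ = ε, λ₃ = λ₄ = 1/2 − 3ε/4 satisfies all three strict inequalities yet λ₁ − α·λ₂ = ε/2 − 2ε²/(2−ε) ≥ 0. -/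
/-! With `λ₃ = λ₄` the rate `α` collapses to `λ₂ / (λ₂ + 2λ₃)`, which for the witness is
`2ε / (2 - ε)`. The three strict inequalities then reduce to `ε/2 < ε`, while
`λ₁ - αλ₂ = ε(2 - 5ε) / (2(2 - ε))` is nonnegative exactly when `ε ≤ 2/5`. -/

lemma sq_sub_sq_div_mul_add_of_eq {K : Type*} [Field K] (a b : K) :
    (a ^ 2 - (b - b) ^ 2) / (a * (a + b + b)) = a / (a + 2 * b) := by
  rcases eq_or_ne a 0 with rfl | ha
  · simp
  · rw [sub_self, zero_pow two_ne_zero, sub_zero, sq, mul_div_mul_left _ _ ha, two_mul, add_assoc]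

lemma half_sub_two_sq_div_two_sub_nonneg {ε : ℝ} (hε0 : 0 ≤ ε) (hε : ε ≤ 2 / 5) :
    0 ≤ ε / 2 - 2 * ε ^ 2 / (2 - ε) := by
  have h2ε : 2 - ε ≠ 0 := by linarith
  have hgap : ε / 2 - 2 * ε ^ 2 / (2 - ε) = ε * (2 - 5 * ε) / (2 * (2 - ε)) := by
    field_simp
    ring
  rw [hgap]
  apply div_nonneg <;> nlinarith

/-- a witness showing that the stability region
`{λ₁ < α·λ₂} ∩ Ncond_C(G)` is strictly contained in `Ncond_C(G)` for the pendant
graph with a self-loop on vertex 2: for any `0 < ε ≤ 2/5`, the rates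
`λ₁ = ε/2, λ₂ = ε, λ₃ = λ₄ = 1/2 − 3ε/4` satisfy the three strict inequalities of
`Ncond_C(G)` yet `λ₁ ≥ α·λ₂`, with `λ₁ − α·λ₂ = ε/2 − 2ε²/(2−ε)`. -/
theorem stmt_18 (ε l1 l2 l3 l4 α : ℝ) (hε0 : 0 < ε) (hε : ε ≤ 2/5)
    (h1 : l1 = ε/2) (h2 : l2 = ε)
    (h3 : l3 = 1/2 - 3*ε/4) (h4 : l4 = 1/2 - 3*ε/4)
    (hα : α = (l2^2 - (l3 - l4)^2) / (l2*(l2 + l3 + l4))) :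
    l1 < l2 ∧ l1 + l3 < l2 + l4 ∧ l1 + l4 < l2 + l3 ∧
      α*l2 ≤ l1 ∧ l1 - α*l2 = ε/2 - 2*ε^2/(2 - ε) := by
  subst l1 l2 l3 l4
  have hα' : α = 2 * ε / (2 - ε) := by
    rw [hα, sq_sub_sq_div_mul_add_of_eq, show ε + 2 * (1 / 2 - 3 * ε / 4) = (2 - ε) / 2 by ring,
      div_div_eq_mul_div, mul_comm]
  have hgap : ε / 2 - α * ε = ε / 2 - 2 * ε ^ 2 / (2 - ε) := by
    rw [hα']
    ring
  have hnonneg := half_sub_two_sq_div_two_sub_nonneg hε0.le hε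
  exact ⟨by linarith, by linarith, by linarith, by linarith, hgap⟩
end
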